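/- Let k ≥ 4 be even and let N > k. Then the clustering coefficient C of the circulant graph C_{N,k} satisfies 3(k-2)/(4(k-1)) ≤ C ≤ 1. -/

import Mathlib

open scoped Classical

/-- Circular distance between two elements of `ZMod N`. -/
def circDist {N : ℕ} (i j : ZMod N) : ℕ := min (i - j).val (j - i).val

/-- The circulant graph `C_{N,k}`: vertices `ZMod N`, `i ~ j` iff the circular
distance between `i` and `j` lies in `{1, ..., k/2}`. -/
def circulant (N k : ℕ) : SimpleGraph (ZMod N) where
  Adj i j := 1 ≤ circDist i j ∧ circDist i j ≤ k / 2
  symm := ⟨by intro i j h; simpa [circDist, min_comm] using h⟩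
  loopless := ⟨by intro i h; simp [circDist] at h⟩

/-- Number of edges among the neighbors of `v`. -/
noncomputable def nbrEdges {V : Type*} [Fintype V] (G : SimpleGraph V) (v : V) : ℕ :=
  (Finset.univ.filter fun p : V × V => G.Adj v p.1 ∧ G.Adj v p.2 ∧ G.Adj p.1 p.2).card / 2

/-- Local clustering coefficient of a vertex. -/
noncomputable def localClustering {V : Type*} [Fintype V] (G : SimpleGraph V) (v : V) : ℚ :=
  (nbrEdges G v : ℚ) / ((G.degree v).choose 2 : ℚ)

/-- (Average) clustering coefficient of a graph. -/
noncomputable def clusteringCoeff {V : Type*} [Fintype V] (G : SimpleGraph V) : ℚ :=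
  (∑ v, localClustering G v) / (Fintype.card V : ℚ)

/-! ### Auxiliary lemmas -/

lemma circDist_translate {N : ℕ} (v i j : ZMod N) : circDist (i + v) (j + v) = circDist i j := by
  simp [circDist, add_sub_add_right_eq_sub]

lemma circDist_eq_zero_sub {N : ℕ} (x y : ZMod N) : circDist x y = circDist 0 (y - x) := by
  simp [circDist, zero_sub, sub_zero, neg_sub]

lemma circDist_zero {N : ℕ} [NeZero N] (x : ZMod N) :
    circDist 0 x = min x.val (N - x.val) := by
  rcases eq_or_ne x 0 with rfl | hx
  · simp [circDist]
  · rw [circDist, zero_sub, sub_zero, ZMod.neg_val, if_neg hx, min_comm]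

lemma circDist_intCast {N : ℕ} [NeZero N] (d : ℤ) (hd : d.natAbs < N) :
    circDist (0 : ZMod N) (d : ZMod N) = min d.natAbs (N - d.natAbs) := by
  rcases le_or_gt 0 d with h | h
  · have hd' : d = (d.toNat : ℤ) := (Int.toNat_of_nonneg h).symm
    have h1 : ((d : ZMod N)).val = d.natAbs := by
      rw [hd']
      push_cast
      rw [ZMod.val_natCast_of_lt (by omega)]
      omega
    rw [circDist_zero, h1]
  · have hd' : d = -((-d).toNat : ℤ) := by omega
    set j : ℕ := (-d).toNat with hj
    have hjn : j = d.natAbs := by omega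
    have h1 : ((d : ZMod N)) = -(j : ZMod N) := by rw [hd']; push_cast; ring
    have hvj : ((j : ZMod N)).val = j := ZMod.val_natCast_of_lt (by omega)
    have hjne : (j : ZMod N) ≠ 0 := by
      intro hc
      rw [hc] at hvj; simp [ZMod.val_zero] at hvj; omega
    rw [circDist_zero, h1, ZMod.neg_val, if_neg hjne, hvj, hjn]
    have : N - (N - d.natAbs) = d.natAbs := by omega
    rw [this, min_comm]

lemma circulant_adj {N k : ℕ} (x y : ZMod N) :
    (circulant N k).Adj x y ↔ 1 ≤ circDist x y ∧ circDist x y ≤ k / 2 := Iff.rfl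

lemma circDist_intCast_small {N m : ℕ} [NeZero N] (hm : 2 * m < N) (d : ℤ)
    (hd : d.natAbs ≤ m) : circDist (0 : ZMod N) (d : ZMod N) = d.natAbs := by
  rw [circDist_intCast d (by omega)]; omega

lemma intCast_inj_small {N m : ℕ} [NeZero N] (hm : 2 * m < N) {a b : ℤ}
    (ha : a.natAbs ≤ m) (hb : b.natAbs ≤ m) (h : (a : ZMod N) = b) : a = b := by
  have h0 : ((a - b : ℤ) : ZMod N) = 0 := by push_cast; rw [h]; ring
  rw [ZMod.intCast_zmod_eq_zero_iff_dvd] at h0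
  obtain ⟨c, hc⟩ := h0
  have hcabs : (a - b).natAbs = N * c.natAbs := by rw [hc]; simp [Int.natAbs_mul]
  have : (a - b).natAbs ≤ 2 * m := by omega
  have hc0 : c.natAbs = 0 := by
    by_contra hne
    have h1 : 1 ≤ c.natAbs := Nat.pos_of_ne_zero hne
    have : N ≤ N * c.natAbs := Nat.le_mul_of_pos_right N h1
    omega
  have : c = 0 := by omega
  rw [this] at hc; omega

lemma adj_zero_iff {N k : ℕ} [NeZero N] (hm : 2 * (k / 2) < N) (x : ZMod N) :
    (circulant N k).Adj 0 x ↔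
      (1 ≤ x.val ∧ x.val ≤ k / 2) ∨ (N - k / 2 ≤ x.val ∧ x.val ≤ N - 1) := by
  rw [circulant_adj, circDist_zero]
  have := ZMod.val_lt x
  omega

lemma degree_zero {N k : ℕ} [NeZero N] (hm : 2 * (k / 2) < N) :
    (circulant N k).degree 0 = 2 * (k / 2) := by
  classical
  set m := k / 2 with hmdef
  rw [SimpleGraph.degree, SimpleGraph.neighborFinset_eq_filter]
  have himg : (Finset.univ.filter fun w => (circulant N k).Adj 0 w).image ZMod.val
      = Finset.Icc 1 m ∪ Finset.Icc (N - m) (N - 1) := by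
    ext t
    simp only [Finset.mem_image, Finset.mem_filter, Finset.mem_union, Finset.mem_Icc,
      Finset.mem_univ, true_and]
    constructor
    · rintro ⟨x, hx, rfl⟩
      rw [adj_zero_iff hm] at hx
      omega
    · intro ht
      have htN : t < N := by omega
      refine ⟨(t : ZMod N), ?_, ZMod.val_natCast_of_lt htN⟩
      rw [adj_zero_iff hm, ZMod.val_natCast_of_lt htN]
      omega
  have hinj := Finset.card_image_of_injective
    (Finset.univ.filter fun w => (circulant N k).Adj 0 w) (ZMod.val_injective N)
  rw [himg] at hinj
  rw [← hinj, Finset.card_union_of_disjoint, Nat.card_Icc, Nat.card_Icc]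
  · omega
  · rw [Finset.disjoint_left]
    intro a ha hb
    simp only [Finset.mem_Icc] at ha hb
    omega

lemma circulant_adj_translate {N k : ℕ} (v x y : ZMod N) :
    (circulant N k).Adj (x + v) (y + v) ↔ (circulant N k).Adj x y := by
  rw [circulant_adj, circulant_adj, circDist_translate]

lemma circulant_adj_sub {N k : ℕ} (v x y : ZMod N) :
    (circulant N k).Adj (x - v) (y - v) ↔ (circulant N k).Adj x y := by
  have := circulant_adj_translate (N := N) (k := k) (-v) x y
  simpa [sub_eq_add_neg] using this

lemma degree_translate {N k : ℕ} [NeZero N] (v : ZMod N) :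
    (circulant N k).degree v = (circulant N k).degree 0 := by
  classical
  rw [SimpleGraph.degree, SimpleGraph.degree, SimpleGraph.neighborFinset_eq_filter,
    SimpleGraph.neighborFinset_eq_filter]
  apply Finset.card_nbij' (fun u => u - v) (fun u => u + v)
  · intro a ha
    simp only [Finset.mem_coe, Finset.mem_filter, Finset.mem_univ, true_and] at ha ⊢
    have := (circulant_adj_sub (N := N) (k := k) v v a).mpr ha
    simpa using this
  · intro a ha
    simp only [Finset.mem_coe, Finset.mem_filter, Finset.mem_univ, true_and] at ha ⊢
    have := (circulant_adj_translate (N := N) (k := k) v 0 a).mpr ha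
    simpa using this
  · intro a _; ring
  · intro a _; ring

lemma nbrEdges_translate {N k : ℕ} [NeZero N] (v : ZMod N) :
    nbrEdges (circulant N k) v = nbrEdges (circulant N k) 0 := by
  classical
  unfold nbrEdges
  congr 1
  apply Finset.card_nbij' (fun p : ZMod N × ZMod N => (p.1 - v, p.2 - v))
    (fun p : ZMod N × ZMod N => (p.1 + v, p.2 + v))
  · rintro ⟨a, b⟩ h
    simp only [Finset.mem_coe, Finset.mem_filter, Finset.mem_univ, true_and] at h ⊢
    obtain ⟨h1, h2, h3⟩ := h
    refine ⟨?_, ?_, (circulant_adj_sub v a b).mpr h3⟩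
    · have := (circulant_adj_sub (N := N) (k := k) v v a).mpr h1; simpa using this
    · have := (circulant_adj_sub (N := N) (k := k) v v b).mpr h2; simpa using this
  · rintro ⟨a, b⟩ h
    simp only [Finset.mem_coe, Finset.mem_filter, Finset.mem_univ, true_and] at h ⊢
    obtain ⟨h1, h2, h3⟩ := h
    refine ⟨?_, ?_, (circulant_adj_translate v a b).mpr h3⟩
    · have := (circulant_adj_translate (N := N) (k := k) v 0 a).mpr h1; simpa using this
    · have := (circulant_adj_translate (N := N) (k := k) v 0 b).mpr h2; simpa using this
  · rintro ⟨a, b⟩ _; simp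
  · rintro ⟨a, b⟩ _; simp

lemma clusteringCoeff_eq_local {N k : ℕ} [NeZero N] :
    clusteringCoeff (circulant N k) = localClustering (circulant N k) 0 := by
  unfold clusteringCoeff
  have h : ∀ v : ZMod N, localClustering (circulant N k) v
      = localClustering (circulant N k) 0 := by
    intro v
    unfold localClustering
    rw [degree_translate, nbrEdges_translate]
  rw [Finset.sum_congr rfl (fun v _ => h v), Finset.sum_const, Finset.card_univ]
  have hN : (0 : ℚ) < (Fintype.card (ZMod N) : ℚ) := by
    have : 0 < Fintype.card (ZMod N) := Fintype.card_pos
    exact_mod_cast this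
  rw [nsmul_eq_mul, mul_comm, mul_div_assoc, div_self (ne_of_gt hN), mul_one]

/-! ### Counting pairs of integers -/

noncomputable def SZ (m : ℕ) : Finset ℤ := (Finset.Icc (-(m : ℤ)) m).erase 0

lemma mem_SZ {m : ℕ} {a : ℤ} : a ∈ SZ m ↔ a ≠ 0 ∧ -(m : ℤ) ≤ a ∧ a ≤ m := by
  simp [SZ, Finset.mem_erase, Finset.mem_Icc, and_assoc]

noncomputable def TT (m : ℕ) : Finset (ℤ × ℤ) :=
  ((SZ m) ×ˢ (SZ m)).filter fun p => 1 ≤ (p.1 - p.2).natAbs ∧ (p.1 - p.2).natAbs ≤ m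

lemma mem_TT {m : ℕ} {p : ℤ × ℤ} : p ∈ TT m ↔ p.1 ∈ SZ m ∧ p.2 ∈ SZ m ∧
    1 ≤ (p.1 - p.2).natAbs ∧ (p.1 - p.2).natAbs ≤ m := by
  simp [TT, Finset.mem_filter, Finset.mem_product, and_assoc]

lemma fiber_card (m : ℕ) (d : ℤ) (hd : d ∈ SZ m) :
    ((TT m).filter fun p => p.1 - p.2 = d).card = 2 * m - 1 - d.natAbs := by
  rw [mem_SZ] at hd
  have hmem1 : (0 : ℤ) ∈ Finset.Icc (max (-(m : ℤ)) (-(m : ℤ) - d)) (min (m : ℤ) ((m : ℤ) - d)) := by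
    simp only [Finset.mem_Icc]; omega
  have hmem2 : -d ∈ (Finset.Icc (max (-(m : ℤ)) (-(m : ℤ) - d)) (min (m : ℤ) ((m : ℤ) - d))).erase 0 := by
    simp only [Finset.mem_erase, Finset.mem_Icc]; omega
  have hcard : (((Finset.Icc (max (-(m : ℤ)) (-(m : ℤ) - d)) (min (m : ℤ) ((m : ℤ) - d))).erase 0).erase (-d)).card
      = 2 * m - 1 - d.natAbs := by
    rw [Finset.card_erase_of_mem hmem2, Finset.card_erase_of_mem hmem1, Int.card_Icc]
    omega
  rw [← hcard]
  apply Finset.card_nbij' (fun p => p.2) (fun b => (b + d, b))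
  · rintro ⟨a, b⟩ hp
    simp only [Finset.mem_coe, Finset.mem_filter] at hp
    obtain ⟨hT, hab⟩ := hp
    rw [mem_TT] at hT
    simp only [mem_SZ] at hT
    simp only [Finset.mem_coe, Finset.mem_erase, Finset.mem_Icc]
    omega
  · intro b hb
    simp only [Finset.mem_coe, Finset.mem_erase, Finset.mem_Icc] at hb
    simp only [Finset.mem_coe, Finset.mem_filter, mem_TT, mem_SZ]
    simp only [max_le_iff, le_min_iff] at hb
    omega
  · rintro ⟨a, b⟩ hp
    simp only [Finset.mem_coe, Finset.mem_filter] at hp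
    have : a - b = d := hp.2
    simp only [Prod.mk.injEq]
    exact ⟨by omega, trivial⟩
  · intro b _; rfl

lemma sum_pos_side (m : ℕ) :
    ∑ d ∈ Finset.Icc (1 : ℤ) m, (2 * m - 1 - d.natAbs) = ∑ i ∈ Finset.range m, (m - 1 + i) := by
  apply Finset.sum_nbij' (fun d : ℤ => ((m : ℤ) - d).toNat) (fun i : ℕ => (m : ℤ) - i)
  · intro d hd; simp only [Finset.mem_Icc] at hd; simp only [Finset.mem_range]; omega
  · intro i hi; simp only [Finset.mem_range] at hi; simp only [Finset.mem_Icc]; omega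
  · intro d hd; simp only [Finset.mem_Icc] at hd; omega
  · intro i hi; simp only [Finset.mem_range] at hi; omega
  · intro d hd; simp only [Finset.mem_Icc] at hd; omega

lemma sum_neg_side (m : ℕ) :
    ∑ d ∈ Finset.Icc (-(m : ℤ)) (-1), (2 * m - 1 - d.natAbs) = ∑ i ∈ Finset.range m, (m - 1 + i) := by
  apply Finset.sum_nbij' (fun d : ℤ => ((m : ℤ) + d).toNat) (fun i : ℕ => (i : ℤ) - m)
  · intro d hd; simp only [Finset.mem_Icc] at hd; simp only [Finset.mem_range]; omega
  · intro i hi; simp only [Finset.mem_range] at hi; simp only [Finset.mem_Icc]; omega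
  · intro d hd; simp only [Finset.mem_Icc] at hd; omega
  · intro i hi; simp only [Finset.mem_range] at hi; omega
  · intro d hd; simp only [Finset.mem_Icc] at hd; omega

lemma TT_card (m : ℕ) : (TT m).card = 3 * m * m - 3 * m := by
  classical
  have hmap : ∀ p ∈ TT m, p.1 - p.2 ∈ SZ m := by
    intro p hp; rw [mem_TT, mem_SZ, mem_SZ] at hp; rw [mem_SZ]; omega
  rw [Finset.card_eq_sum_card_fiberwise hmap]
  rw [Finset.sum_congr rfl (fun d hd => fiber_card m d hd)]
  have hsplit : SZ m = Finset.Icc (1 : ℤ) m ∪ Finset.Icc (-(m : ℤ)) (-1) := by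
    ext a
    simp only [mem_SZ, Finset.mem_union, Finset.mem_Icc]
    omega
  have hdisj : Disjoint (Finset.Icc (1 : ℤ) m) (Finset.Icc (-(m : ℤ)) (-1)) := by
    rw [Finset.disjoint_left]
    intro a ha hb
    simp only [Finset.mem_Icc] at ha hb
    omega
  rw [hsplit, Finset.sum_union hdisj, sum_pos_side, sum_neg_side]
  have hS : (∑ i ∈ Finset.range m, i) * 2 = m * (m - 1) := Finset.sum_range_id_mul_two m
  have hsum : ∑ i ∈ Finset.range m, (m - 1 + i)
      = (m - 1) * m + ∑ i ∈ Finset.range m, i := by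
    rw [Finset.sum_add_distrib, Finset.sum_const, Finset.card_range, smul_eq_mul, mul_comm]
  rw [hsum]
  have e1 : m * (m - 1) + m = m * m := by
    cases m with
    | zero => simp
    | succ n => simp [Nat.succ_sub_one]; ring
  have e2 : (m - 1) * m = m * (m - 1) := Nat.mul_comm _ _
  have e3 : 3 * m * m = 3 * (m * m) := by ring
  omega

lemma edges_lower {N k : ℕ} [NeZero N] (m : ℕ) (hk : k / 2 = m) (hmN : 2 * m < N) :
    3 * m * m - 3 * m ≤ 2 * nbrEdges (circulant N k) 0 := by
  classical
  unfold nbrEdges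
  have hinj : (TT m).card ≤ (Finset.univ.filter fun p : ZMod N × ZMod N =>
      (circulant N k).Adj 0 p.1 ∧ (circulant N k).Adj 0 p.2 ∧ (circulant N k).Adj p.1 p.2).card := by
    apply Finset.card_le_card_of_injOn (fun p => ((p.1 : ZMod N), (p.2 : ZMod N)))
    · rintro ⟨a, b⟩ hp
      rw [Finset.mem_coe, mem_TT, mem_SZ, mem_SZ] at hp
      obtain ⟨⟨ha0, ha1, ha2⟩, ⟨hb0, hb1, hb2⟩, hd1, hd2⟩ := hp
      have haAbs : a.natAbs ≤ m := by omega
      have hbAbs : b.natAbs ≤ m := by omega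
      simp only [Finset.mem_coe, Finset.mem_filter, Finset.mem_univ, true_and]
      refine ⟨?_, ?_, ?_⟩
      · rw [circulant_adj, circDist_intCast_small hmN a haAbs, hk]; omega
      · rw [circulant_adj, circDist_intCast_small hmN b hbAbs, hk]; omega
      · rw [circulant_adj, circDist_eq_zero_sub]
        have hcast : ((b : ZMod N)) - a = ((b - a : ℤ) : ZMod N) := by push_cast; ring
        rw [hcast, circDist_intCast_small hmN (b - a) (by omega), hk]
        omega
    · rintro ⟨a, b⟩ hab ⟨c, d⟩ hcd hfe
      simp only [Finset.mem_coe, mem_TT, mem_SZ] at hab hcd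
      simp only [Prod.mk.injEq] at hfe
      obtain ⟨h1, h2⟩ := hfe
      have hac := intCast_inj_small hmN (a := a) (b := c) (by omega) (by omega) h1
      have hbd := intCast_inj_small hmN (a := b) (b := d) (by omega) (by omega) h2
      simp [hac, hbd]
  have hTT := TT_card m
  have e1 : m * (m - 1) + m = m * m := by
    cases m with
    | zero => simp
    | succ n => simp [Nat.succ_sub_one]; ring
  have e3 : 3 * m * m = 3 * (m * m) := by ring
  have hPe : 2 ∣ m * (m - 1) := by
    cases m with
    | zero => simp
    | succ n => simpa [Nat.succ_sub_one, Nat.mul_comm] using (Nat.even_mul_succ_self n).two_dvd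
  omega

lemma nbrEdges_le {V : Type*} [Fintype V] (G : SimpleGraph V) (v : V) :
    nbrEdges G v ≤ (G.degree v).choose 2 := by
  classical
  unfold nbrEdges
  have hsub : (Finset.univ.filter fun p : V × V =>
      G.Adj v p.1 ∧ G.Adj v p.2 ∧ G.Adj p.1 p.2) ⊆ (G.neighborFinset v).offDiag := by
    rintro ⟨a, b⟩ h
    simp only [Finset.mem_filter, Finset.mem_univ, true_and] at h
    rw [Finset.mem_offDiag]
    exact ⟨(SimpleGraph.mem_neighborFinset _ _ _).mpr h.1,
      (SimpleGraph.mem_neighborFinset _ _ _).mpr h.2.1, G.ne_of_adj h.2.2⟩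
  have hcard := Finset.card_le_card hsub
  rw [Finset.offDiag_card] at hcard
  rw [SimpleGraph.degree, Nat.choose_two_right]
  set d := (G.neighborFinset v).card
  have hd : d * d - d = d * (d - 1) := by
    cases d with
    | zero => simp
    | succ n =>
      have h : (n + 1) * (n + 1) = (n + 1) * n + (n + 1) := by ring
      simp only [Nat.succ_sub_one]
      omega
  omega

theorem stmt5 (N k : ℕ) [NeZero N] (hke : Even k) (hk4 : 4 ≤ k) (hN : k < N) :
    3 * ((k : ℚ) - 2) / (4 * ((k : ℚ) - 1)) ≤ clusteringCoeff (circulant N k) ∧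
    clusteringCoeff (circulant N k) ≤ 1 := by
  obtain ⟨m, hk2⟩ : ∃ m, k = 2 * m := by
    rcases hke with ⟨t, ht⟩; exact ⟨t, by omega⟩
  have hm2 : 2 ≤ m := by omega
  have hk : k / 2 = m := by omega
  have hmN : 2 * m < N := by omega
  have hmN' : 2 * (k / 2) < N := by omega
  rw [clusteringCoeff_eq_local]
  have hdeg : (circulant N k).degree 0 = 2 * m := by rw [degree_zero hmN', hk]
  have hchoose : (2 * m).choose 2 = m * (2 * m - 1) := by
    rw [Nat.choose_two_right]
    have h2 : 2 * m * (2 * m - 1) = 2 * (m * (2 * m - 1)) := Nat.mul_assoc 2 m (2 * m - 1)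
    omega
  set E := nbrEdges (circulant N k) 0 with hE
  have hEup : E ≤ (2 * m).choose 2 := by
    have := nbrEdges_le (circulant N k) 0
    rwa [hdeg] at this
  have hElow : 3 * m * m - 3 * m ≤ 2 * E := edges_lower m hk hmN
  have hloc : localClustering (circulant N k) 0 = (E : ℚ) / (((2 * m).choose 2 : ℕ) : ℚ) := by
    unfold localClustering
    rw [hdeg]
  rw [hloc, hchoose]
  have hDnat : 0 < m * (2 * m - 1) := by
    have : 1 ≤ 2 * m - 1 := by omega
    exact Nat.mul_pos (by omega) this
  have hD : (0 : ℚ) < ((m * (2 * m - 1) : ℕ) : ℚ) := by exact_mod_cast hDnat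
  set mQ : ℚ := (m : ℚ) with hmQ
  have hmQ2 : (2 : ℚ) ≤ mQ := by rw [hmQ]; exact_mod_cast hm2
  have hkQ : (k : ℚ) = 2 * mQ := by rw [hk2]; push_cast; ring
  have hDQ : ((m * (2 * m - 1) : ℕ) : ℚ) = mQ * (2 * mQ - 1) := by
    have h1 : (((2 * m - 1 : ℕ)) : ℚ) = 2 * mQ - 1 := by
      have : ((2 * m - 1 : ℕ) : ℚ) + 1 = ((2 * m : ℕ) : ℚ) := by
        exact_mod_cast congrArg (Nat.cast : ℕ → ℚ) (by omega : (2 * m - 1) + 1 = 2 * m)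
      push_cast at this
      linarith
    push_cast [← h1]
    ring
  have hEQ : 3 * mQ * mQ - 3 * mQ ≤ 2 * (E : ℚ) := by
    have hc : ((3 * m * m - 3 * m : ℕ) : ℚ) ≤ ((2 * E : ℕ) : ℚ) := by exact_mod_cast hElow
    have e1 : m ≤ m * m := Nat.le_mul_of_pos_left m (by omega)
    have e3 : 3 * m * m = 3 * (m * m) := by ring
    have hsub : ((3 * m * m - 3 * m : ℕ) : ℚ) = 3 * mQ * mQ - 3 * mQ := by
      rw [Nat.cast_sub (by omega)]
      push_cast
      ring
    rw [hsub] at hc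
    push_cast at hc
    linarith
  constructor
  · have h4 : (0 : ℚ) < 4 * ((k : ℚ) - 1) := by rw [hkQ]; nlinarith
    rw [div_le_div_iff₀ h4 hD, hkQ, hDQ]
    have key : (3 * mQ * mQ - 3 * mQ) * (2 * (2 * mQ - 1)) ≤ (2 * (E : ℚ)) * (2 * (2 * mQ - 1)) := by
      apply mul_le_mul_of_nonneg_right hEQ
      nlinarith
    nlinarith [key]
  · rw [div_le_one hD, hDQ]
    have : (E : ℚ) ≤ ((m * (2 * m - 1) : ℕ) : ℚ) := by
      exact_mod_cast hchoose ▸ hEup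
    rw [hDQ] at this
    exact this
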